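/- arXiv:1606.04871 — 3 statements merged into one kernel-verified Lean document; each statement's English description precedes it below -/
import Mathlib

section
/- Let (𝔪,𝔭,η) and (𝔫,𝔮,μ) be Leibniz crossed modules equipped with compatible action data as in the hypotheses of the main construction, i.e. actions of 𝔭 on 𝔫 and on 𝔮 such that μ([p,n]) = [p,μ(n)], μ([n,p]) = [μ(n),p], [n,[p,q]] = [[n,p],q] − [[n,q],p], [p,[n,q]] = [[p,n],q] − [[p,q],n], [p,[q,n]] = [[p,q],n] − [[p,n],q], [n,[q,p]] = [[n,q],p] − [[n,p],q], [q,[n,p]] = [[q,n],p] − [[q,p],n], [q,[p,n]] = [[q,p],n] − [[q,n],p], with 𝔪 acting on 𝔫 and 𝔮 via η, and bilinear maps ξ₁: 𝔪×𝔮 → 𝔫, ξ₂: 𝔮×𝔪 → 𝔫 satisfying μ(ξ₂(q,m)) = [q,m], μ(ξ₁(m,q)) = [m,q], ξ₂(μ(n),m) = [n,m], ξ₁(m,μ(n)) = [m,n], ξ₂(q,[p,m]) = ξ₂([q,p],m) − [ξ₂(q,m),p], ξ₁([p,m],q) = ξ₂([p,q],m) − [p,ξ₂(q,m)], ξ₂(q,[m,p])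 = [ξ₂(q,m),p] − ξ₂([q,p],m), ξ₁([m,p],q) = [ξ₁(m,q),p] − ξ₁(m,[q,p]), ξ₂(q,[m,m']) = [ξ₂(q,m),m'] − [ξ₂(q,m'),m], ξ₁([m,m'],q) = [ξ₁(m,q),m'] − [m,ξ₂(q,m')], ξ₂([q,q'],m) = [ξ₂(q,m),q'] + [q,ξ₂(q',m)], ξ₁(m,[q,q']) = [ξ₁(m,q),q'] − [ξ₁(m,q'),q], [q,ξ₁(m,q')] = −[q,ξ₂(q',m)], ξ₁(m,[p,q]) = −ξ₁(m,[q,p]), and [p,ξ₁(m,q)] = −[p,ξ₂(q,m)]. Then the bilinear maps [(q,p),(n,m)] = ([q,n] + [p,n] + ξ₂(q,m), [p,m]) and [(n,m),(q,p)] = ([n,q] + [n,p] + ξ₁(m,q), [m,p]) define an action of the semidirect product Leibniz algebra 𝔮 ⋊ 𝔭 on the semidirect product Leibniz algebra 𝔫 ⋊ 𝔪, i.e. the six Leibniz action identities hold. -/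
/-- A Leibniz algebra structure (a bilinear bracket satisfying the Leibniz identity)
on a `k`-module `M`. -/
structure LeibnizBracket (k M : Type*) [CommRing k] [AddCommGroup M] [Module k M] where
  br : M →ₗ[k] M →ₗ[k] M
  leibniz : ∀ x y z : M, br (br x y) z = br x (br y z) + br (br x z) y

/-- An action of a Leibniz algebra `P` on a Leibniz algebra `M`:
a pair of bilinear maps `pm : P × M → M`, `mp : M × P → M` satisfying the six
Leibniz action identities. -/
structure LeibnizAction (k P M : Type*) [CommRing k]
    [AddCommGroup P] [Module k P] [AddCommGroup M] [Module k M]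
    (LP : LeibnizBracket k P) (LM : LeibnizBracket k M) where
  pm : P →ₗ[k] M →ₗ[k] M
  mp : M →ₗ[k] P →ₗ[k] M
  act1 : ∀ (p : P) (m m' : M), pm p (LM.br m m') = LM.br (pm p m) m' - LM.br (pm p m') m
  act2 : ∀ (m : M) (p : P) (m' : M), LM.br m (pm p m') = LM.br (mp m p) m' - mp (LM.br m m') p
  act3 : ∀ (m m' : M) (p : P), LM.br m (mp m' p) = mp (LM.br m m') p - LM.br (mp m p) m'
  act4 : ∀ (m : M) (p p' : P), mp m (LP.br p p') = mp (mp m p) p' - mp (mp m p') p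
  act5 : ∀ (p : P) (m : M) (p' : P), pm p (mp m p') = mp (pm p m) p' - pm (LP.br p p') m
  act6 : ∀ (p p' : P) (m : M), pm p (pm p' m) = pm (LP.br p p') m - mp (pm p m) p'

/-- A crossed module of Leibniz algebras `(N, Q, mu)`. -/
structure LeibnizXMod (k N Q : Type*) [CommRing k]
    [AddCommGroup N] [Module k N] [AddCommGroup Q] [Module k Q]
    (LN : LeibnizBracket k N) (LQ : LeibnizBracket k Q) where
  act : LeibnizAction k Q N LQ LN
  mu : N →ₗ[k] Q
  map_br : ∀ n n', mu (LN.br n n') = LQ.br (mu n) (mu n')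
  equiv1 : ∀ q n, mu (act.pm q n) = LQ.br q (mu n)
  equiv2 : ∀ n q, mu (act.mp n q) = LQ.br (mu n) q
  peiffer1 : ∀ n n', act.pm (mu n) n' = LN.br n n'
  peiffer2 : ∀ n n', act.mp n (mu n') = LN.br n n'

/-- `(d, D)` is a biderivation of the Leibniz algebra `M`. -/
def IsBider {k M : Type*} [CommRing k] [AddCommGroup M] [Module k M]
    (LM : LeibnizBracket k M) (d D : M →ₗ[k] M) : Prop :=
  (∀ x y, d (LM.br x y) = LM.br (d x) y + LM.br x (d y)) ∧
  (∀ x y, D (LM.br x y) = LM.br (D x) y - LM.br (D y) x) ∧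
  (∀ x y, LM.br x (d y) = LM.br x (D y))

/-- `(d, D)` is a biderivation from `Q` to `N`, relative to an action of `Q` on `N`. -/
def IsBiderQN {k Q N : Type*} [CommRing k] [AddCommGroup Q] [Module k Q]
    [AddCommGroup N] [Module k N] {LQ : LeibnizBracket k Q} {LN : LeibnizBracket k N}
    (a : LeibnizAction k Q N LQ LN) (d D : Q →ₗ[k] N) : Prop :=
  (∀ q q', d (LQ.br q q') = a.mp (d q) q' + a.pm q (d q')) ∧
  (∀ q q', D (LQ.br q q') = a.mp (D q) q' - a.mp (D q') q) ∧
  (∀ q q', a.pm q (d q') = a.pm q (D q'))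

/-- `((s1,t1),(s2,t2))` is a biderivation of the Leibniz crossed module `X = (N,Q,mu)`. -/
def IsBiderXMod {k N Q : Type*} [CommRing k] [AddCommGroup N] [Module k N]
    [AddCommGroup Q] [Module k Q] {LN : LeibnizBracket k N} {LQ : LeibnizBracket k Q}
    (X : LeibnizXMod k N Q LN LQ) (s1 t1 : N →ₗ[k] N) (s2 t2 : Q →ₗ[k] Q) : Prop :=
  IsBider LN s1 t1 ∧ IsBider LQ s2 t2 ∧
  (∀ n, X.mu (s1 n) = s2 (X.mu n)) ∧ (∀ n, X.mu (t1 n) = t2 (X.mu n)) ∧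
  (∀ q n, s1 (X.act.pm q n) = X.act.pm (s2 q) n + X.act.pm q (s1 n)) ∧
  (∀ n q, s1 (X.act.mp n q) = X.act.mp (s1 n) q + X.act.mp n (s2 q)) ∧
  (∀ q n, t1 (X.act.pm q n) = X.act.pm (t2 q) n - X.act.mp (t1 n) q) ∧
  (∀ n q, t1 (X.act.mp n q) = X.act.mp (t1 n) q - X.act.pm (t2 q) n) ∧
  (∀ q n, X.act.pm q (s1 n) = X.act.pm q (t1 n)) ∧
  (∀ n q, X.act.mp n (s2 q) = X.act.mp n (t2 q))

/-- The bracket `[(d₁,D₁),(d₂,D₂)] = (d₁μd₂ − d₂μd₁, D₁μd₂ − d₂μD₁)` on pairs of maps `Q → N`. -/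
def brQN {k N Q : Type*} [CommRing k] [AddCommGroup N] [Module k N]
    [AddCommGroup Q] [Module k Q] (mu : N →ₗ[k] Q)
    (a b : (Q →ₗ[k] N) × (Q →ₗ[k] N)) : (Q →ₗ[k] N) × (Q →ₗ[k] N) :=
  (a.1 ∘ₗ mu ∘ₗ b.1 - b.1 ∘ₗ mu ∘ₗ a.1, a.2 ∘ₗ mu ∘ₗ b.1 - b.1 ∘ₗ mu ∘ₗ a.2)

/-- The componentwise bracket on quadruples `((σ₁,θ₁),(σ₂,θ₂))`. -/
def brX {k N Q : Type*} [CommRing k] [AddCommGroup N] [Module k N]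
    [AddCommGroup Q] [Module k Q]
    (x y : (N →ₗ[k] N) × (N →ₗ[k] N) × (Q →ₗ[k] Q) × (Q →ₗ[k] Q)) :
    (N →ₗ[k] N) × (N →ₗ[k] N) × (Q →ₗ[k] Q) × (Q →ₗ[k] Q) :=
  (x.1 ∘ₗ y.1 - y.1 ∘ₗ x.1, x.2.1 ∘ₗ y.1 - y.1 ∘ₗ x.2.1,
   x.2.2.1 ∘ₗ y.2.2.1 - y.2.2.1 ∘ₗ x.2.2.1, x.2.2.2 ∘ₗ y.2.2.1 - y.2.2.1 ∘ₗ x.2.2.2)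

/-- The left action `[((σ₁,θ₁),(σ₂,θ₂)),(d,D)] = (σ₁d − dσ₂, θ₁d − dθ₂)`. -/
def actXL {k N Q : Type*} [CommRing k] [AddCommGroup N] [Module k N]
    [AddCommGroup Q] [Module k Q]
    (x : (N →ₗ[k] N) × (N →ₗ[k] N) × (Q →ₗ[k] Q) × (Q →ₗ[k] Q))
    (a : (Q →ₗ[k] N) × (Q →ₗ[k] N)) : (Q →ₗ[k] N) × (Q →ₗ[k] N) :=
  (x.1 ∘ₗ a.1 - a.1 ∘ₗ x.2.2.1, x.2.1 ∘ₗ a.1 - a.1 ∘ₗ x.2.2.2)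

/-- The right action `[(d,D),((σ₁,θ₁),(σ₂,θ₂))] = (dσ₂ − σ₁d, Dσ₂ − σ₁D)`. -/
def actXR {k N Q : Type*} [CommRing k] [AddCommGroup N] [Module k N]
    [AddCommGroup Q] [Module k Q]
    (a : (Q →ₗ[k] N) × (Q →ₗ[k] N))
    (x : (N →ₗ[k] N) × (N →ₗ[k] N) × (Q →ₗ[k] Q) × (Q →ₗ[k] Q)) :
    (Q →ₗ[k] N) × (Q →ₗ[k] N) :=
  (a.1 ∘ₗ x.2.2.1 - x.1 ∘ₗ a.1, a.2 ∘ₗ x.2.2.1 - x.1 ∘ₗ a.2)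

/-- The map `Δ(d,D) = ((d∘μ, D∘μ), (μ∘d, μ∘D))`. -/
def deltaMap {k N Q : Type*} [CommRing k] [AddCommGroup N] [Module k N]
    [AddCommGroup Q] [Module k Q] (mu : N →ₗ[k] Q)
    (a : (Q →ₗ[k] N) × (Q →ₗ[k] N)) :
    (N →ₗ[k] N) × (N →ₗ[k] N) × (Q →ₗ[k] Q) × (Q →ₗ[k] Q) :=
  (a.1 ∘ₗ mu, a.2 ∘ₗ mu, mu ∘ₗ a.1, mu ∘ₗ a.2)

/-- Membership in `Bider(Q,N)` for a pair. -/
def MemQN {k N Q : Type*} [CommRing k] [AddCommGroup N] [Module k N]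
    [AddCommGroup Q] [Module k Q] {LN : LeibnizBracket k N} {LQ : LeibnizBracket k Q}
    (X : LeibnizXMod k N Q LN LQ) (a : (Q →ₗ[k] N) × (Q →ₗ[k] N)) : Prop :=
  IsBiderQN X.act a.1 a.2

/-- Membership in `Bider(N,Q,μ)` for a quadruple. -/
def MemX {k N Q : Type*} [CommRing k] [AddCommGroup N] [Module k N]
    [AddCommGroup Q] [Module k Q] {LN : LeibnizBracket k N} {LQ : LeibnizBracket k Q}
    (X : LeibnizXMod k N Q LN LQ)
    (x : (N →ₗ[k] N) × (N →ₗ[k] N) × (Q →ₗ[k] Q) × (Q →ₗ[k] Q)) : Prop :=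
  IsBiderXMod X x.1 x.2.1 x.2.2.1 x.2.2.2

/-- The semidirect product bracket on `M × P` coming from an action of `P` on `M`. -/
def sdBr {k M P : Type*} [CommRing k] [AddCommGroup M] [Module k M]
    [AddCommGroup P] [Module k P] (LM : LeibnizBracket k M) (LP : LeibnizBracket k P)
    (a : LeibnizAction k P M LP LM) (u v : M × P) : M × P :=
  (LM.br u.1 v.1 + a.pm u.2 v.1 + a.mp u.1 v.2, LP.br u.2 v.2)

/-- Compatible action data of a Leibniz crossed module `Y = (M,P,η)` on `X = (N,Q,μ)`:
actions of `P` on `N` and `Q` (with `M` acting via `η = Y.mu`) together with the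
bilinear maps `ξ₁ : M × Q → N` and `ξ₂ : Q × M → N` subject to the equations
(LbEQ), (LbCOM) and (LbM) of the main construction. -/
structure CompatData {k M P N Q : Type*} [CommRing k]
    [AddCommGroup M] [Module k M] [AddCommGroup P] [Module k P]
    [AddCommGroup N] [Module k N] [AddCommGroup Q] [Module k Q]
    {LM : LeibnizBracket k M} {LP : LeibnizBracket k P}
    {LN : LeibnizBracket k N} {LQ : LeibnizBracket k Q}
    (Y : LeibnizXMod k M P LM LP) (X : LeibnizXMod k N Q LN LQ) where
  aPN : LeibnizAction k P N LP LN
  aPQ : LeibnizAction k P Q LP LQ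
  xi1 : M →ₗ[k] Q →ₗ[k] N
  xi2 : Q →ₗ[k] M →ₗ[k] N
  eq1 : ∀ p n, X.mu (aPN.pm p n) = aPQ.pm p (X.mu n)
  eq2 : ∀ n p, X.mu (aPN.mp n p) = aPQ.mp (X.mu n) p
  com1 : ∀ n p q, X.act.mp n (aPQ.pm p q) = X.act.mp (aPN.mp n p) q - aPN.mp (X.act.mp n q) p
  com2 : ∀ p n q, aPN.pm p (X.act.mp n q) = X.act.mp (aPN.pm p n) q - X.act.pm (aPQ.pm p q) n
  com3 : ∀ p q n, aPN.pm p (X.act.pm q n) = X.act.pm (aPQ.pm p q) n - X.act.mp (aPN.pm p n) q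
  com4 : ∀ n q p, X.act.mp n (aPQ.mp q p) = aPN.mp (X.act.mp n q) p - X.act.mp (aPN.mp n p) q
  com5 : ∀ q n p, X.act.pm q (aPN.mp n p) = aPN.mp (X.act.pm q n) p - X.act.pm (aPQ.mp q p) n
  com6 : ∀ q p n, X.act.pm q (aPN.pm p n) = X.act.pm (aPQ.mp q p) n - aPN.mp (X.act.pm q n) p
  m1a : ∀ q m, X.mu (xi2 q m) = aPQ.mp q (Y.mu m)
  m1b : ∀ m q, X.mu (xi1 m q) = aPQ.pm (Y.mu m) q
  m2a : ∀ n m, xi2 (X.mu n) m = aPN.mp n (Y.mu m)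
  m2b : ∀ m n, xi1 m (X.mu n) = aPN.pm (Y.mu m) n
  m3a : ∀ q p m, xi2 q (Y.act.pm p m) = xi2 (aPQ.mp q p) m - aPN.mp (xi2 q m) p
  m3b : ∀ p m q, xi1 (Y.act.pm p m) q = xi2 (aPQ.pm p q) m - aPN.pm p (xi2 q m)
  m3c : ∀ q m p, xi2 q (Y.act.mp m p) = aPN.mp (xi2 q m) p - xi2 (aPQ.mp q p) m
  m3d : ∀ m p q, xi1 (Y.act.mp m p) q = aPN.mp (xi1 m q) p - xi1 m (aPQ.mp q p)
  m4a : ∀ q m m', xi2 q (LM.br m m') = aPN.mp (xi2 q m) (Y.mu m') - aPN.mp (xi2 q m') (Y.mu m)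
  m4b : ∀ m m' q, xi1 (LM.br m m') q = aPN.mp (xi1 m q) (Y.mu m') - aPN.pm (Y.mu m) (xi2 q m')
  m5a : ∀ q q' m, xi2 (LQ.br q q') m = X.act.mp (xi2 q m) q' + X.act.pm q (xi2 q' m)
  m5b : ∀ m q q', xi1 m (LQ.br q q') = X.act.mp (xi1 m q) q' - X.act.mp (xi1 m q') q
  m5c : ∀ q m q', X.act.pm q (xi1 m q') = - X.act.pm q (xi2 q' m)
  m6a : ∀ m p q, xi1 m (aPQ.pm p q) = - xi1 m (aPQ.mp q p)
  m6b : ∀ p m q, aPN.pm p (xi1 m q) = - aPN.pm p (xi2 q m)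

variable {k M P N Q : Type*} [CommRing k]
    [AddCommGroup M] [Module k M] [AddCommGroup P] [Module k P]
    [AddCommGroup N] [Module k N] [AddCommGroup Q] [Module k Q]
    {LM : LeibnizBracket k M} {LP : LeibnizBracket k P}
    {LN : LeibnizBracket k N} {LQ : LeibnizBracket k Q}
    {Y : LeibnizXMod k M P LM LP} {X : LeibnizXMod k N Q LN LQ}

/-- `φ(m) = (d_m, D_m)` where `d_m(q) = −ξ₂(q,m)` and `D_m(q) = ξ₁(m,q)`. -/
def phiMap (C : CompatData Y X) (m : M) : (Q →ₗ[k] N) × (Q →ₗ[k] N) :=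
  (-(C.xi2.flip m), C.xi1 m)

/-- `ψ(p) = ((σ₁^p,θ₁^p),(σ₂^p,θ₂^p))` with `σ₁^p(n) = −[n,p]`, `θ₁^p(n) = [p,n]`,
`σ₂^p(q) = −[q,p]`, `θ₂^p(q) = [p,q]`. -/
def psiMap (C : CompatData Y X) (p : P) :
    (N →ₗ[k] N) × (N →ₗ[k] N) × (Q →ₗ[k] Q) × (Q →ₗ[k] Q) :=
  (-(C.aPN.mp.flip p), C.aPN.pm p, -(C.aPQ.mp.flip p), C.aPQ.pm p)

/-- The semidirect product bracket on `N × M` (with `M` acting on `N` via `η = Y.mu`). -/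
def brNM (C : CompatData Y X) (u v : N × M) : N × M :=
  (LN.br u.1 v.1 + C.aPN.pm (Y.mu u.2) v.1 + C.aPN.mp u.1 (Y.mu v.2), LM.br u.2 v.2)

/-- The semidirect product bracket on `Q × P`. -/
def brQP (C : CompatData Y X) (u v : Q × P) : Q × P :=
  (LQ.br u.1 v.1 + C.aPQ.pm u.2 v.1 + C.aPQ.mp u.1 v.2, LP.br u.2 v.2)

/-- The left action `[(q,p),(n,m)] = ([q,n] + [p,n] + ξ₂(q,m), [p,m])` of `Q ⋊ P` on `N ⋊ M`. -/
def sdActL (C : CompatData Y X) (u : Q × P) (a : N × M) : N × M :=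
  (X.act.pm u.1 a.1 + C.aPN.pm u.2 a.1 + C.xi2 u.1 a.2, Y.act.pm u.2 a.2)

/-- The right action `[(n,m),(q,p)] = ([n,q] + [n,p] + ξ₁(m,q), [m,p])` of `Q ⋊ P` on `N ⋊ M`. -/
def sdActR (C : CompatData Y X) (a : N × M) (u : Q × P) : N × M :=
  (X.act.mp a.1 u.1 + C.aPN.mp a.1 u.2 + C.xi1 a.2 u.1, Y.act.mp a.2 u.2)

/-!
In each identity the `𝔪`-component is the corresponding action identity of `𝔭` on `𝔪`. The
`𝔫`-component is expanded by bilinearity; each resulting term is rewritten by the action identities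
of `𝔮` and of `𝔭` on `𝔫`, the compatibilities between them and the equations satisfied by `ξ₁, ξ₂`,
after which the two sides agree as formal sums. The only terms none of these equations reach
directly are brackets `[n, ξ(m, q)]` inside `𝔫`: by the Peiffer identity they equal `[n, μ ξ(m, q)]`,
and `μ ∘ ξ` is a bracket in `𝔮`, which the compatibilities do reach.
-/

namespace CompatData

variable (C : CompatData Y X)

theorem br_xi2 (n : N) (q : Q) (m : M) :
    LN.br n (C.xi2 q m) = C.aPN.mp (X.act.mp n q) (Y.mu m) - X.act.mp (C.aPN.mp n (Y.mu m)) q := by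
  rw [← X.peiffer2, C.m1a, C.com4]

theorem br_xi1 (n : N) (m : M) (q : Q) :
    LN.br n (C.xi1 m q) = X.act.mp (C.aPN.mp n (Y.mu m)) q - C.aPN.mp (X.act.mp n q) (Y.mu m) := by
  rw [← X.peiffer2, C.m1b, C.com1]

theorem sdActL_brNM (u : Q × P) (a b : N × M) :
    sdActL C u (brNM C a b) = brNM C (sdActL C u a) b - brNM C (sdActL C u b) a := by
  refine Prod.ext ?_ (Y.act.act1 u.2 a.2 b.2)
  simp only [sdActL, brNM, Prod.fst_sub, map_add, LinearMap.add_apply, X.act.act1, C.aPN.act1,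
    C.aPN.act5, C.aPN.act6, C.com5, C.com6, ← C.m1a, C.m4a, Y.equiv1, X.peiffer1]
  abel

theorem brNM_sdActL (a : N × M) (u : Q × P) (b : N × M) :
    brNM C a (sdActL C u b) = brNM C (sdActR C a u) b - sdActR C (brNM C a b) u := by
  refine Prod.ext ?_ (Y.act.act2 a.2 u.2 b.2)
  simp only [sdActL, sdActR, brNM, Prod.fst_sub, map_add, LinearMap.add_apply, X.act.act2,
    C.aPN.act2, C.aPN.act4, C.aPN.act6, C.com3, ← C.m1b, C.m4b, br_xi2, Y.equiv1, Y.equiv2,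
    X.peiffer1]
  abel

theorem brNM_sdActR (a b : N × M) (u : Q × P) :
    brNM C a (sdActR C b u) = sdActR C (brNM C a b) u - brNM C (sdActR C a u) b := by
  refine Prod.ext ?_ (Y.act.act3 a.2 b.2 u.2)
  simp only [sdActR, brNM, Prod.fst_sub, map_add, LinearMap.add_apply, X.act.act3, C.aPN.act3,
    C.aPN.act4, C.aPN.act5, C.com2, ← C.m1b, C.m4b, C.m6b, br_xi1, Y.equiv2, X.peiffer1]
  abel

theorem sdActR_brQP (a : N × M) (u v : Q × P) :
    sdActR C a (brQP C u v) = sdActR C (sdActR C a u) v - sdActR C (sdActR C a v) u := by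
  refine Prod.ext ?_ (Y.act.act4 a.2 u.2 v.2)
  simp only [sdActR, brQP, Prod.fst_sub, map_add, LinearMap.add_apply, X.act.act4, C.aPN.act4,
    C.com1, C.com4, C.m3d, C.m5b, C.m6a]
  abel

theorem sdActL_sdActR (u : Q × P) (a : N × M) (v : Q × P) :
    sdActL C u (sdActR C a v) = sdActR C (sdActL C u a) v - sdActL C (brQP C u v) a := by
  refine Prod.ext ?_ (Y.act.act5 u.2 a.2 v.2)
  simp only [sdActL, sdActR, brQP, Prod.fst_sub, map_add, LinearMap.add_apply, X.act.act5,
    C.aPN.act5, C.com2, C.com5, C.m3b, C.m3c, C.m5a, C.m5c, C.m6b]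
  abel

theorem sdActL_sdActL (u v : Q × P) (a : N × M) :
    sdActL C u (sdActL C v a) = sdActL C (brQP C u v) a - sdActR C (sdActL C u a) v := by
  refine Prod.ext ?_ (Y.act.act6 u.2 v.2 a.2)
  simp only [sdActL, sdActR, brQP, Prod.fst_sub, map_add, LinearMap.add_apply, X.act.act6,
    C.aPN.act6, C.com3, C.com6, C.m3a, C.m3b, C.m5a]
  abel

end CompatData

/-- Theorem 4.6: `sdActL`/`sdActR` define an action of `Q ⋊ P` on `N ⋊ M`,
i.e. the six Leibniz action identities hold. -/
theorem semidirect_action_isAction {k M P N Q : Type*} [CommRing k]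
    [AddCommGroup M] [Module k M] [AddCommGroup P] [Module k P]
    [AddCommGroup N] [Module k N] [AddCommGroup Q] [Module k Q]
    {LM : LeibnizBracket k M} {LP : LeibnizBracket k P}
    {LN : LeibnizBracket k N} {LQ : LeibnizBracket k Q}
    {Y : LeibnizXMod k M P LM LP} {X : LeibnizXMod k N Q LN LQ}
    (C : CompatData Y X) :
    (∀ (u : Q × P) (a b : N × M),
      sdActL C u (brNM C a b) = brNM C (sdActL C u a) b - brNM C (sdActL C u b) a) ∧
    (∀ (a : N × M) (u : Q × P) (b : N × M),
      brNM C a (sdActL C u b) = brNM C (sdActR C a u) b - sdActR C (brNM C a b) u) ∧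
    (∀ (a b : N × M) (u : Q × P),
      brNM C a (sdActR C b u) = sdActR C (brNM C a b) u - brNM C (sdActR C a u) b) ∧
    (∀ (a : N × M) (u v : Q × P),
      sdActR C a (brQP C u v) = sdActR C (sdActR C a u) v - sdActR C (sdActR C a v) u) ∧
    (∀ (u : Q × P) (a : N × M) (v : Q × P),
      sdActL C u (sdActR C a v) = sdActR C (sdActL C u a) v - sdActL C (brQP C u v) a) ∧
    (∀ (u v : Q × P) (a : N × M),
      sdActL C u (sdActL C v a) = sdActL C (brQP C u v) a - sdActR C (sdActL C u a) v) :=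
  ⟨C.sdActL_brNM, C.brNM_sdActL, C.brNM_sdActR, C.sdActR_brQP, C.sdActL_sdActR, C.sdActL_sdActL⟩
end

section
/- Let (𝔪,𝔭,η) and (𝔫,𝔮,μ) be Leibniz crossed modules equipped with compatible action data as in the hypotheses of the main construction, i.e. actions of 𝔭 on 𝔫 and on 𝔮 such that μ([p,n]) = [p,μ(n)], μ([n,p]) = [μ(n),p], [n,[p,q]] = [[n,p],q] − [[n,q],p], [p,[n,q]] = [[p,n],q] − [[p,q],n], [p,[q,n]] = [[p,q],n] − [[p,n],q], [n,[q,p]] = [[n,q],p] − [[n,p],q], [q,[n,p]] = [[q,n],p] − [[q,p],n], [q,[p,n]] = [[q,p],n] − [[q,n],p], with 𝔪 acting on 𝔫 and 𝔮 via η, and bilinear maps ξ₁: 𝔪×𝔮 → 𝔫, ξ₂: 𝔮×𝔪 → 𝔫 satisfying μ(ξ₂(q,m)) = [q,m], μ(ξ₁(m,q)) = [m,q], ξ₂(μ(n),m) = [n,m], ξ₁(m,μ(n)) = [m,n], ξ₂(q,[p,m]) = ξ₂([q,p],m) − [ξ₂(q,m),p], ξ₁([p,m],q) = ξ₂([p,q],m)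 − [p,ξ₂(q,m)], ξ₂(q,[m,p]) = [ξ₂(q,m),p] − ξ₂([q,p],m), ξ₁([m,p],q) = [ξ₁(m,q),p] − ξ₁(m,[q,p]), ξ₂(q,[m,m']) = [ξ₂(q,m),m'] − [ξ₂(q,m'),m], ξ₁([m,m'],q) = [ξ₁(m,q),m'] − [m,ξ₂(q,m')], ξ₂([q,q'],m) = [ξ₂(q,m),q'] + [q,ξ₂(q',m)], ξ₁(m,[q,q']) = [ξ₁(m,q),q'] − [ξ₁(m,q'),q], [q,ξ₁(m,q')] = −[q,ξ₂(q',m)], ξ₁(m,[p,q]) = −ξ₁(m,[q,p]), and [p,ξ₁(m,q)] = −[p,ξ₂(q,m)]. Then the map (μ,η): 𝔫 ⋊ 𝔪 → 𝔮 ⋊ 𝔭, (n,m) ↦ (μ(n),η(m)), is a homomorphism of Leibniz algebras and, together with the action [(q,p),(n,m)] = ([q,n] + [p,n] + ξ₂(q,m), [p,m]), [(n,m),(q,p)] = ([n,q] + [n,p] + ξ₁(m,q), [m,p]), satisfies the equivariance identities (μ,η)([(q,p),(n,m)]) = [(q,p),(μ(n),η(m))] and (μ,η)([(n,m),(q,p)])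 = [(μ(n),η(m)),(q,p)] and the Peiffer identities [(μ(n),η(m)),(n',m')] = [(n,m),(n',m')] = [(n,m),(μ(n'),η(m'))]; that is, (𝔫 ⋊ 𝔪, 𝔮 ⋊ 𝔭, (μ,η)) is a Leibniz crossed module (the semidirect product of the two crossed modules). -/
variable {k M P N Q : Type*} [CommRing k]
    [AddCommGroup M] [Module k M] [AddCommGroup P] [Module k P]
    [AddCommGroup N] [Module k N] [AddCommGroup Q] [Module k Q]
    {LM : LeibnizBracket k M} {LP : LeibnizBracket k P}
    {LN : LeibnizBracket k N} {LQ : LeibnizBracket k Q}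
    {Y : LeibnizXMod k M P LM LP} {X : LeibnizXMod k N Q LN LQ}

/-- Theorem 4.6, continued: `(μ,η) : N ⋊ M → Q ⋊ P` is a Leibniz
homomorphism satisfying equivariance and the Peiffer identities, i.e.
`(N ⋊ M, Q ⋊ P, (μ,η))` is a Leibniz crossed module. -/
theorem semidirect_isXMod {k M P N Q : Type*} [CommRing k]
    [AddCommGroup M] [Module k M] [AddCommGroup P] [Module k P]
    [AddCommGroup N] [Module k N] [AddCommGroup Q] [Module k Q]
    {LM : LeibnizBracket k M} {LP : LeibnizBracket k P}
    {LN : LeibnizBracket k N} {LQ : LeibnizBracket k Q}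
    {Y : LeibnizXMod k M P LM LP} {X : LeibnizXMod k N Q LN LQ}
    (C : CompatData Y X) :
    (∀ a b : N × M,
      X.mu.prodMap Y.mu (brNM C a b) = brQP C (X.mu.prodMap Y.mu a) (X.mu.prodMap Y.mu b)) ∧
    (∀ (u : Q × P) (a : N × M),
      X.mu.prodMap Y.mu (sdActL C u a) = brQP C u (X.mu.prodMap Y.mu a)) ∧
    (∀ (a : N × M) (u : Q × P),
      X.mu.prodMap Y.mu (sdActR C a u) = brQP C (X.mu.prodMap Y.mu a) u) ∧
    (∀ a b : N × M, sdActL C (X.mu.prodMap Y.mu a) b = brNM C a b) ∧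
    (∀ a b : N × M, sdActR C a (X.mu.prodMap Y.mu b) = brNM C a b) := by
  refine ⟨fun a b => ?_, fun u a => ?_, fun a u => ?_, fun a b => ?_, fun a b => ?_⟩
  · simp only [brNM, brQP, LinearMap.prodMap_apply, Prod.mk.injEq, map_add,
      X.map_br, C.eq1, C.eq2, Y.map_br]
  · simp only [sdActL, brQP, LinearMap.prodMap_apply, Prod.mk.injEq, map_add,
      X.equiv1, C.eq1, C.m1a, Y.equiv1]
  · simp only [sdActR, brQP, LinearMap.prodMap_apply, Prod.mk.injEq, map_add,
      X.equiv2, C.eq2, C.m1b, Y.equiv2]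
    exact ⟨by abel, trivial⟩
  · simp only [sdActL, brNM, LinearMap.prodMap_apply, Prod.mk.injEq,
      X.peiffer1, C.m2a, Y.peiffer1]
  · simp only [sdActR, brNM, LinearMap.prodMap_apply, Prod.mk.injEq,
      X.peiffer2, C.m2b, Y.peiffer2]
    exact ⟨by abel, trivial⟩
end

section
/- Let (𝔪,𝔭,η) be a Leibniz crossed module. Define φ: 𝔪 → Bider(𝔭,𝔪) by φ(m) = (d_m, D_m) with d_m(p) = −[p,m], D_m(p) = [m,p], and ψ: 𝔭 → Bider(𝔪,𝔭,η) by ψ(p) = ((σ₁^p,θ₁^p),(σ₂^p,θ₂^p)) with σ₁^p(m) = −[m,p], θ₁^p(m) = [p,m], σ₂^p(p') = −[p',p], θ₂^p(p') = [p,p']. Then φ and ψ are well defined (i.e. (d_m,D_m) ∈ Bider(𝔭,𝔪) for every m ∈ 𝔪 and ψ(p) ∈ Bider(𝔪,𝔭,η) for every p ∈ 𝔭), φ and ψ preserve brackets (with the bracket [(d₁,D₁),(d₂,D₂)] = (d₁ηd₂ − d₂ηd₁, D₁ηd₂ − d₂ηD₁) on Bider(𝔭,𝔪) and the componentwise bracket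 on Bider(𝔪,𝔭,η)), Δ∘φ = ψ∘η where Δ(d,D) = ((dη,Dη),(ηd,ηD)), and φ([p,m]) = (σ₁^p d_m − d_m σ₂^p, θ₁^p d_m − d_m θ₂^p), φ([m,p]) = (d_m σ₂^p − σ₁^p d_m, D_m σ₂^p − σ₁^p D_m) for all m ∈ 𝔪, p ∈ 𝔭; that is, (φ,ψ) is the canonical homomorphism of Leibniz crossed modules from (𝔪,𝔭,η) to (Bider(𝔭,𝔪), Bider(𝔪,𝔭,η), Δ). -/
/-- the canonical homomorphism `(φ,ψ)` from a Leibniz crossed module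
`(M,P,η)` to `(Bider(P,M), Bider(M,P,η), Δ)`. -/
theorem canonical_hom_to_actor {k M P : Type*} [CommRing k]
    [AddCommGroup M] [Module k M] [AddCommGroup P] [Module k P]
    {LM : LeibnizBracket k M} {LP : LeibnizBracket k P}
    (Y : LeibnizXMod k M P LM LP) :
    (∀ m : M, MemQN Y ((-(Y.act.pm.flip m), Y.act.mp m) : (P →ₗ[k] M) × (P →ₗ[k] M))) ∧
    (∀ p : P, MemX Y ((-(Y.act.mp.flip p), Y.act.pm p, -(LP.br.flip p), LP.br p) :
      (M →ₗ[k] M) × (M →ₗ[k] M) × (P →ₗ[k] P) × (P →ₗ[k] P))) ∧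
    (∀ m m' : M,
      ((-(Y.act.pm.flip (LM.br m m')), Y.act.mp (LM.br m m')) : (P →ₗ[k] M) × (P →ₗ[k] M))
        = brQN Y.mu (-(Y.act.pm.flip m), Y.act.mp m) (-(Y.act.pm.flip m'), Y.act.mp m')) ∧
    (∀ p p' : P,
      ((-(Y.act.mp.flip (LP.br p p')), Y.act.pm (LP.br p p'),
        -(LP.br.flip (LP.br p p')), LP.br (LP.br p p')) :
        (M →ₗ[k] M) × (M →ₗ[k] M) × (P →ₗ[k] P) × (P →ₗ[k] P))
        = brX (-(Y.act.mp.flip p), Y.act.pm p, -(LP.br.flip p), LP.br p)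
              (-(Y.act.mp.flip p'), Y.act.pm p', -(LP.br.flip p'), LP.br p')) ∧
    (∀ m : M,
      deltaMap Y.mu (-(Y.act.pm.flip m), Y.act.mp m)
        = (-(Y.act.mp.flip (Y.mu m)), Y.act.pm (Y.mu m),
           -(LP.br.flip (Y.mu m)), LP.br (Y.mu m))) ∧
    (∀ (p : P) (m : M),
      ((-(Y.act.pm.flip (Y.act.pm p m)), Y.act.mp (Y.act.pm p m)) :
        (P →ₗ[k] M) × (P →ₗ[k] M))
        = actXL (-(Y.act.mp.flip p), Y.act.pm p, -(LP.br.flip p), LP.br p)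
                (-(Y.act.pm.flip m), Y.act.mp m)) ∧
    (∀ (m : M) (p : P),
      ((-(Y.act.pm.flip (Y.act.mp m p)), Y.act.mp (Y.act.mp m p)) :
        (P →ₗ[k] M) × (P →ₗ[k] M))
        = actXR (-(Y.act.pm.flip m), Y.act.mp m)
                (-(Y.act.mp.flip p), Y.act.pm p, -(LP.br.flip p), LP.br p)) := by
  have a1 := Y.act.act1; have a2 := Y.act.act2; have a3 := Y.act.act3
  have a4 := Y.act.act4; have a5 := Y.act.act5; have a6 := Y.act.act6
  have lM := LM.leibniz; have lP := LP.leibniz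
  have pf1 := Y.peiffer1; have pf2 := Y.peiffer2
  have e1 := Y.equiv1; have e2 := Y.equiv2; have mb := Y.map_br
  refine ⟨?_, ?_, ?_, ?_, ?_, ?_, ?_⟩
  · -- φ well defined
    intro m
    simp only [MemQN, IsBiderQN]
    refine ⟨fun q q' => ?_, fun q q' => ?_, fun q q' => ?_⟩ <;>
      (try simp only [LinearMap.neg_apply, LinearMap.flip_apply, map_neg])
    · linear_combination (norm := abel1) a6 q q' m
    · exact a4 m q q'
    · linear_combination (norm := abel1) -a6 q q' m - a5 q m q'
  · -- ψ well defined
    intro p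
    simp only [MemX, IsBiderXMod, IsBider]
    refine ⟨⟨fun x y => ?_, fun x y => ?_, fun x y => ?_⟩,
      ⟨fun x y => ?_, fun x y => ?_, fun x y => ?_⟩,
      fun n => ?_, fun n => ?_, fun q n => ?_, fun n q => ?_, fun q n => ?_,
      fun n q => ?_, fun q n => ?_, fun n q => ?_⟩ <;>
      (try simp only [LinearMap.neg_apply, LinearMap.flip_apply, map_neg])
    · linear_combination (norm := abel1) a3 x y p
    · exact a1 p x y
    · linear_combination (norm := abel1) -a3 x y p - a2 x p y
    · linear_combination (norm := abel1) -lP x y p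
    · linear_combination (norm := abel1) -lP p x y
    · linear_combination (norm := abel1) lP x y p + lP x p y
    · linear_combination (norm := abel1) -e2 n p
    · exact e1 p n
    · linear_combination (norm := abel1) a5 q n p
    · linear_combination (norm := abel1) a4 n q p
    · linear_combination (norm := abel1) a6 p q n
    · linear_combination (norm := abel1) a5 p n q
    · linear_combination (norm := abel1) -a5 q n p - a6 q p n
    · linear_combination (norm := abel1) -a4 n q p - a4 n p q
  · -- φ preserves brackets
    intro m m'
    refine Prod.ext ?_ ?_ <;> refine LinearMap.ext fun q => ?_ <;>
      simp only [brQN, LinearMap.sub_apply, LinearMap.coe_comp, Function.comp_apply,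
        LinearMap.neg_apply, LinearMap.flip_apply, map_neg, e1, e2]
    · have h1 := a6 q (Y.mu m') m
      have h2 := a6 q (Y.mu m) m'
      simp only [pf1, pf2] at h1 h2
      linear_combination (norm := abel1) h1 - h2 - a1 q m' m
    · have h4 := a4 m q (Y.mu m')
      simp only [pf2] at h4
      have h5 := pf1 (Y.act.mp m q) m'
      rw [e2] at h5
      linear_combination (norm := abel1) h4 - h5
  · -- ψ preserves brackets
    intro p p'
    refine Prod.ext ?_ (Prod.ext ?_ (Prod.ext ?_ ?_)) <;> refine LinearMap.ext fun x => ?_ <;>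
      simp only [brX, LinearMap.sub_apply, LinearMap.coe_comp, Function.comp_apply,
        LinearMap.neg_apply, LinearMap.flip_apply, map_neg]
    · linear_combination (norm := abel1) -a4 x p p'
    · linear_combination (norm := abel1) a5 p x p'
    · linear_combination (norm := abel1) lP x p p'
    · linear_combination (norm := abel1) -lP p x p'
  · -- Δ ∘ φ = ψ ∘ η
    intro m
    refine Prod.ext ?_ (Prod.ext ?_ (Prod.ext ?_ ?_)) <;> refine LinearMap.ext fun x => ?_ <;>
      simp only [deltaMap, LinearMap.coe_comp, Function.comp_apply,
        LinearMap.neg_apply, LinearMap.flip_apply, map_neg, e1, e2, pf1, pf2]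
  · -- φ([p,m]) = actXL
    intro p m
    refine Prod.ext ?_ ?_ <;> refine LinearMap.ext fun q => ?_ <;>
      simp only [actXL, LinearMap.sub_apply, LinearMap.coe_comp, Function.comp_apply,
        LinearMap.neg_apply, LinearMap.flip_apply, map_neg]
    · linear_combination (norm := abel1) -a6 q p m
    · linear_combination (norm := abel1) a6 p q m
  · -- φ([m,p]) = actXR
    intro m p
    refine Prod.ext ?_ ?_ <;> refine LinearMap.ext fun q => ?_ <;>
      simp only [actXR, LinearMap.sub_apply, LinearMap.coe_comp, Function.comp_apply,
        LinearMap.neg_apply, LinearMap.flip_apply, map_neg]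
    · linear_combination (norm := abel1) -a5 q m p
    · linear_combination (norm := abel1) a4 m q p
end
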